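/- Let K be a number field of degree d over ℚ, and let L be a finite extension of K of degree n ≥ 3 (inside a fixed algebraic closure of K) such that L/K has no proper subextensions. Then there exists a constant c > 0, depending only on n and K, such that for every real Y ≥ 1, the number of nonzero x ∈ 𝓞_L with Tr^L_K(x) = 0 and house(x) ≤ Y is at most c · (Y · Δ_{L/K}^{−1/(n(n−1)d)})^{(n−1)d}. -/

import Mathlib

/-!
A nonzero trace-zero integer `x` of `L` does not lie in `K`, so it generates `L` over `K`, as
`L/K` has no proper subextensions. Hence `f'(x)`, with `f` the minimal polynomial of `x` over `𝓞_K`, lies in the different of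
`L/K`. Every conjugate of `f'(x)` is a product of `n - 1` differences of conjugates of `x`, so
`Δ_{L/K} ≤ N(f'(x)) ≤ (2 · house x)^((n-1)[L:ℚ])`. Applied to differences, this says the
trace-zero integers of house at most `Y` are `Δ^(1/(n(n-1)d)) / 2`-separated in the canonical
embedding `L → ℂ^[L:ℚ]`, where they lie in the real span of the trace-zero `ℚ`-subspace, of
dimension at most `(n-1)d`. A volume packing argument in that span bounds their number by
`(6 Y Δ^(-1/(n(n-1)d)))^((n-1)d)`.
-/

open NumberField Module

/-- `Δ_{L/K}`: the absolute norm of the relative discriminant of `L/K`, computed as the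
absolute norm of the different ideal of `𝓞_L` over `𝓞_K` (and junk value `0` if `L/K` is
not finite). -/
noncomputable def relDiscNorm (K : Type*) [Field K] [NumberField K]
    {Kbar : Type*} [Field Kbar] [Algebra K Kbar]
    (L : IntermediateField K Kbar) : ℕ := by
  classical
  exact if h : FiniteDimensional K L then
    haveI : CharZero L := charZero_of_injective_algebraMap (algebraMap K L).injective
    haveI : FiniteDimensional ℚ L := Module.Finite.trans (R := ℚ) K L
    haveI : NumberField L :=
      { to_charZero := inferInstance, to_finiteDimensional := inferInstance }
    Ideal.absNorm (differentIdeal (𝓞 K) (𝓞 L))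
  else 0

/-- The house of an algebraic integer: the largest complex absolute value of the roots of
its minimal polynomial over `ℤ`. -/
noncomputable def house' {F : Type*} [Field F] (x : F) : ℝ :=
  sSup ((fun z : ℂ => ‖z‖) '' ((minpoly ℤ x).rootSet ℂ))

open Polynomial IntermediateField Metric MeasureTheory

section Packing

variable {E : Type*} [NormedAddCommGroup E] [NormedSpace ℝ E]

theorem Finset.card_le_of_norm_le_of_separated [FiniteDimensional ℝ E] (s : Finset E) {R r : ℝ}
    (hR : 0 ≤ R) (hr : 0 < r) (hs : ∀ x ∈ s, ‖x‖ ≤ R)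
    (hsep : ∀ x ∈ s, ∀ y ∈ s, x ≠ y → r ≤ ‖x - y‖) :
    (s.card : ℝ) ≤ ((2 * R + r) / r) ^ finrank ℝ E := by
  borelize E
  let μ : Measure E := Measure.addHaar
  have hdisj : (s : Set E).Pairwise (Function.onFun Disjoint fun x => ball x (r / 2)) :=
    fun x hx y hy hxy => ball_disjoint_ball (by
      rw [dist_eq_norm]; linarith [hsep x hx y hy hxy])
  have hsub : ⋃ x ∈ s, ball x (r / 2) ⊆ ball (0 : E) (R + r / 2) :=
    Set.iUnion₂_subset fun x hx => ball_subset_ball' (by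
      rw [dist_zero_right]; linarith [hs x hx])
  have hvol : (s.card : ENNReal) * ENNReal.ofReal ((r / 2) ^ finrank ℝ E) * μ (ball 0 1) ≤
      ENNReal.ofReal ((R + r / 2) ^ finrank ℝ E) * μ (ball 0 1) := by
    calc (s.card : ENNReal) * ENNReal.ofReal ((r / 2) ^ finrank ℝ E) * μ (ball 0 1)
        = μ (⋃ x ∈ s, ball x (r / 2)) := by
          rw [measure_biUnion_finset hdisj fun _ _ => measurableSet_ball]
          simp only [μ.addHaar_ball_of_pos _ (half_pos hr), Finset.sum_const, nsmul_eq_mul,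
            mul_assoc]
      _ ≤ μ (ball 0 (R + r / 2)) := measure_mono hsub
      _ = ENNReal.ofReal ((R + r / 2) ^ finrank ℝ E) * μ (ball 0 1) :=
          μ.addHaar_ball_of_pos _ (by positivity)
  have hcard := ENNReal.toReal_le_of_le_ofReal (by positivity)
    ((ENNReal.mul_le_mul_iff_left (measure_ball_pos μ _ one_pos).ne'
      measure_ball_lt_top.ne).1 hvol)
  rw [ENNReal.toReal_mul, ENNReal.toReal_natCast, ENNReal.toReal_ofReal (by positivity),
    ← le_div_iff₀ (by positivity), ← div_pow] at hcard
  rwa [show (R + r / 2) / (r / 2) = (2 * R + r) / r by field_simp] at hcard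

theorem Submodule.finite_and_ncard_le_of_norm_le_of_separated (W : Submodule ℝ E)
    [FiniteDimensional ℝ W] {s : Set E} (hsW : s ⊆ W) {R r : ℝ}
    (hR : 0 ≤ R) (hr : 0 < r) (hs : ∀ x ∈ s, ‖x‖ ≤ R)
    (hsep : ∀ x ∈ s, ∀ y ∈ s, x ≠ y → r ≤ ‖x - y‖) :
    s.Finite ∧ (s.ncard : ℝ) ≤ ((2 * R + r) / r) ^ finrank ℝ W := by
  classical
  have hcard (t : Finset E) (hts : (t : Set E) ⊆ s) :
      (t.card : ℝ) ≤ ((2 * R + r) / r) ^ finrank ℝ W := by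
    have := (t.subtype (· ∈ W)).card_le_of_norm_le_of_separated hR hr
      (fun x hx => hs x (hts (Finset.mem_subtype.1 hx)))
      (fun x hx y hy hxy => hsep x (hts (Finset.mem_subtype.1 hx)) y
        (hts (Finset.mem_subtype.1 hy)) (Subtype.coe_injective.ne hxy))
    rwa [Finset.card_subtype,
      Finset.filter_true_of_mem fun x hx => SetLike.mem_coe.1 (hsW (hts hx))] at this
  have hfin : s.Finite := by
    by_contra hinf
    obtain ⟨t, hts, ht⟩ := Set.Infinite.exists_subset_card_eq hinf
      (⌊((2 * R + r) / r) ^ finrank ℝ W⌋₊ + 1)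
    have := hcard t hts
    rw [ht, Nat.cast_add_one] at this
    exact (Nat.lt_floor_add_one _).not_ge this
  refine ⟨hfin, ?_⟩
  rw [Set.ncard_eq_toFinset_card s hfin]
  exact hcard _ (by simp)

end Packing

theorem LinearMap.finrank_span_range_le {k F V E : Type*} [Field k] [Field F] [Algebra k F]
    [AddCommGroup V] [Module k V] [FiniteDimensional k V]
    [AddCommGroup E] [Module k E] [Module F E] [IsScalarTower k F E] (f : V →ₗ[k] E) :
    finrank F (Submodule.span F (Set.range f)) ≤ finrank k V := by
  let b := Module.finBasis k V
  have hrange : Set.range f = Submodule.span k (Set.range (f ∘ b)) := by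
    rw [← LinearMap.coe_range, LinearMap.range_eq_map, ← b.span_eq, Submodule.map_span,
      ← Set.range_comp]
  rw [hrange, Submodule.span_span_of_tower]
  simpa [Set.finrank] using finrank_range_le_card (R := F) (f ∘ b)

theorem IntermediateField.adjoin_simple_eq_top_of_trace_eq_zero {K L : Type*} [Field K]
    [CharZero K] [Field L] [Algebra K L] [FiniteDimensional K L]
    (hM : ∀ M : IntermediateField K L, M = ⊥ ∨ M = ⊤) {x : L} (hx : x ≠ 0)
    (htr : Algebra.trace K L x = 0) : K⟮x⟯ = ⊤ := by
  refine (hM K⟮x⟯).resolve_left fun hbot => hx ?_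
  obtain ⟨c, rfl⟩ := mem_bot.1 (hbot ▸ mem_adjoin_simple_self K x)
  rw [Algebra.trace_algebraMap, nsmul_eq_mul, mul_eq_zero, Nat.cast_eq_zero] at htr
  rw [htr.resolve_left finrank_pos.ne', map_zero]

namespace NumberField

theorem house_le_house' {L : Type*} [Field L] [NumberField L] {x : L} (hx : IsIntegral ℤ x) :
    house x ≤ house' x := by
  rw [house, canonicalEmbedding.norm_le_iff]
  intro φ
  refine le_csSup (((minpoly ℤ x).rootSet ℂ).toFinite.image _).bddAbove ⟨φ x, ?_, rfl⟩
  rw [mem_rootSet, aeval_def, Subsingleton.elim (algebraMap ℤ ℂ) (φ.comp (algebraMap ℤ L)),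
    ← hom_eval₂, ← aeval_def, minpoly.aeval, map_zero]
  exact ⟨minpoly.ne_zero hx, rfl⟩

variable {K L : Type*} [Field K] [NumberField K] [Field L] [NumberField L] [Algebra K L]

theorem norm_norm_le_house_pow (α : L) : ‖Algebra.norm ℚ α‖ ≤ house α ^ finrank ℚ L := by
  obtain ⟨σ⟩ : Nonempty (L →+* ℂ) := inferInstance
  calc ‖Algebra.norm ℚ α‖ ≤ ‖σ α‖ * house α ^ (finrank ℚ L - 1) :=
        norm_norm_le_norm_mul_house_pow α σ
    _ ≤ house α * house α ^ (finrank ℚ L - 1) :=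
        mul_le_mul_of_nonneg_right (norm_embedding_le_house α σ) (pow_nonneg (house_nonneg α) _)
    _ = house α ^ finrank ℚ L := mul_pow_sub_one finrank_pos.ne' _

theorem absNorm_span_singleton_le_house_pow (w : 𝓞 L) :
    (Ideal.absNorm (Ideal.span {w}) : ℝ) ≤ house (w : L) ^ finrank ℚ L := by
  rw [Ideal.absNorm_span_singleton, Nat.cast_natAbs, Int.cast_abs, ← Rat.cast_intCast,
    Algebra.coe_norm_int, ← Real.norm_eq_abs, Rat.norm_cast_real]
  exact norm_norm_le_house_pow _

theorem norm_le_house_of_isRoot_map_minpoly (x : L) (ρ : K →+* ℂ) {a : ℂ}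
    (ha : ((minpoly K x).map ρ).IsRoot a) : ‖a‖ ≤ house x := by
  have hdvd : (minpoly K x).map ρ ∣ (minpoly ℚ x).map (algebraMap ℚ ℂ) := by
    simpa [Polynomial.map_map, Subsingleton.elim (ρ.comp (algebraMap ℚ K)) (algebraMap ℚ ℂ)]
      using Polynomial.map_dvd ρ (minpoly.dvd_map_of_isScalarTower ℚ K x)
  have hroot : a ∈ (minpoly ℚ x).rootSet ℂ := by
    rw [mem_rootSet, aeval_def, eval₂_eq_eval_map]
    exact ⟨minpoly.ne_zero (Algebra.IsIntegral.isIntegral x),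
      eval_eq_zero_of_dvd_of_eval_eq_zero hdvd ha⟩
  obtain ⟨φ, rfl⟩ := (Embeddings.range_eval_eq_rootSet_minpoly L ℂ x).symm ▸ hroot
  exact norm_embedding_le_house x φ

theorem house_aeval_derivative_minpoly_le (x : L) :
    house (aeval x (derivative (minpoly K x))) ≤
      (2 * house x) ^ ((minpoly K x).natDegree - 1) := by
  rw [house, canonicalEmbedding.norm_le_iff]
  intro σ
  set ρ := σ.comp (algebraMap K L)
  set g := (minpoly K x).map ρ
  have hσ (p : K[X]) : σ (aeval x p) = (p.map ρ).eval (σ x) := by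
    rw [aeval_def, hom_eval₂, eval_map]
  have hg : g.Monic := (minpoly.monic (Algebra.IsIntegral.isIntegral x)).map ρ
  have hsplit : g.Splits := IsAlgClosed.splits g
  have hroot : σ x ∈ g.roots :=
    mem_roots'.2 ⟨hg.ne_zero, by rw [IsRoot, ← hσ, minpoly.aeval, map_zero]⟩
  have hfactor (a) (ha : a ∈ g.roots.erase (σ x)) : ‖σ x - a‖ ≤ 2 * house x := by
    have := norm_le_house_of_isRoot_map_minpoly x ρ
      (isRoot_of_mem_roots (Multiset.mem_of_mem_erase ha))
    linarith [norm_sub_le (σ x) a, norm_embedding_le_house x σ]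
  have hcard : Multiset.card (g.roots.erase (σ x)) = (minpoly K x).natDegree - 1 := by
    rw [Multiset.card_erase_of_mem hroot, ← hsplit.natDegree_eq_card_roots, natDegree_map,
      Nat.pred_eq_sub_one]
  rw [hσ, ← derivative_map]
  change ‖eval (σ x) (derivative g)‖ ≤ _
  -- `σ (f' x) = ∏ (σ x - a)` over the other roots `a` of `σ f`, all conjugates of `x`
  rw [hsplit.eq_prod_roots_of_monic hg, eval_multiset_prod_X_sub_C_derivative hroot,
    ← normHom_apply, map_multiset_prod]
  refine (Multiset.prod_map_le_pow_card (r := 2 * house x)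
    (fun _ _ => norm_nonneg (E := ℂ) _) ?_).trans_eq ?_
  · simpa using hfactor
  · rw [Multiset.card_map, hcard]

theorem absNorm_differentIdeal_le (z : 𝓞 L) (hz : K⟮(z : L)⟯ = ⊤) :
    (Ideal.absNorm (differentIdeal (𝓞 K) (𝓞 L)) : ℝ) ≤
      (2 * house (z : L)) ^ ((finrank K L - 1) * finrank ℚ L) := by
  set w := aeval z (derivative (minpoly (𝓞 K) z))
  have hmin : minpoly K (z : L) = (minpoly (𝓞 K) z).map (algebraMap (𝓞 K) K) :=
    minpoly.isIntegrallyClosed_eq_field_fractions K L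
      (IsIntegral.tower_top (IsIntegralClosure.isIntegral ℤ L z))
  have hwL : (w : L) = aeval (z : L) (derivative (minpoly K (z : L))) := by
    rw [hmin, derivative_map, aeval_map_algebraMap]
    exact (aeval_algebraMap_apply L z _).symm
  have hw0 : w ≠ 0 := by
    have : (w : L) ≠ 0 := hwL ▸
      (Algebra.IsSeparable.isSeparable K (z : L)).aeval_derivative_ne_zero (minpoly.aeval K _)
    exact fun h => this (by rw [h]; rfl)
  have hmem : w ∈ differentIdeal (𝓞 K) (𝓞 L) :=
    aeval_derivative_mem_differentIdeal (𝓞 K) K L z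
      (Algebra.adjoin_eq_top_of_primitive_element (Algebra.IsAlgebraic.isAlgebraic _) hz)
  have hdeg : (minpoly K (z : L)).natDegree = finrank K L :=
    (Field.primitive_element_iff_minpoly_natDegree_eq K _).1 hz
  calc (Ideal.absNorm (differentIdeal (𝓞 K) (𝓞 L)) : ℝ) ≤ Ideal.absNorm (Ideal.span {w}) :=
        Nat.cast_le.2 <| Nat.le_of_dvd (Nat.pos_of_ne_zero (by simpa using hw0))
          (Ideal.absNorm_dvd_absNorm_of_le ((Ideal.span_singleton_le_iff_mem _).2 hmem))
    _ ≤ house (w : L) ^ finrank ℚ L := absNorm_span_singleton_le_house_pow w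
    _ ≤ ((2 * house (z : L)) ^ (finrank K L - 1)) ^ finrank ℚ L := by
        gcongr
        · exact house_nonneg _
        · rw [hwL, ← hdeg]
          exact house_aeval_derivative_minpoly_le _
    _ = _ := by rw [← pow_mul]

theorem finrank_ker_trace :
    finrank ℚ (LinearMap.ker ((Algebra.trace K L).restrictScalars ℚ)) =
      (finrank K L - 1) * finrank ℚ K := by
  have hsurj : Function.Surjective ((Algebra.trace K L).restrictScalars ℚ) :=
    Algebra.trace_surjective K L
  have := LinearMap.finrank_range_add_finrank_ker ((Algebra.trace K L).restrictScalars ℚ)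
  rw [LinearMap.range_eq_top.2 hsurj, finrank_top, ← Module.finrank_mul_finrank ℚ K L] at this
  rw [Nat.sub_mul, one_mul, mul_comm]
  exact Nat.eq_sub_of_add_eq' this

theorem finite_and_ncard_le_of_house_sub_ge {S : Set L}
    (htr : ∀ x ∈ S, Algebra.trace K L x = 0) {Y r : ℝ} (hY : 0 ≤ Y) (hr : 0 < r)
    (hSY : ∀ x ∈ S, house x ≤ Y) (hsep : ∀ x ∈ S, ∀ y ∈ S, x ≠ y → r ≤ house (x - y)) :
    S.Finite ∧ (S.ncard : ℝ) ≤ ((2 * Y + r) / r) ^ ((finrank K L - 1) * finrank ℚ K) := by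
  let f := (canonicalEmbedding L).toRatAlgHom.toLinearMap ∘ₗ
    (LinearMap.ker ((Algebra.trace K L).restrictScalars ℚ)).subtype
  have hinj := canonicalEmbedding_injective L
  obtain ⟨hfin, hcard⟩ :=
    (Submodule.span ℝ (Set.range f)).finite_and_ncard_le_of_norm_le_of_separated
      (s := canonicalEmbedding L '' S)
      (by rintro _ ⟨x, hx, rfl⟩; exact Submodule.subset_span ⟨⟨x, htr x hx⟩, rfl⟩) hY hr
      (by rintro _ ⟨x, hx, rfl⟩; exact hSY x hx)
      (by
        rintro _ ⟨x, hx, rfl⟩ _ ⟨y, hy, rfl⟩ hxy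
        rw [← map_sub]
        exact hsep x hx y hy (ne_of_apply_ne _ hxy))
  refine ⟨hfin.of_finite_image hinj.injOn, ?_⟩
  rw [← Set.ncard_image_of_injective S hinj]
  exact hcard.trans (pow_le_pow_right₀ ((one_le_div hr).2 (by linarith))
    ((LinearMap.finrank_span_range_le f).trans_eq finrank_ker_trace))

variable (K) in
def traceZeroIntegersOfHouseLE (Y : ℝ) : Set L :=
  {x | x ≠ 0 ∧ IsIntegral ℤ x ∧ Algebra.trace K L x = 0 ∧ house x ≤ Y}

theorem finite_traceZeroIntegersOfHouseLE_and_ncard_le (hn : 1 < finrank K L)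
    (hM : ∀ M : IntermediateField K L, M = ⊥ ∨ M = ⊤) {Y : ℝ} (hY : 0 ≤ Y) :
    (traceZeroIntegersOfHouseLE K Y : Set L).Finite ∧
      ((traceZeroIntegersOfHouseLE K Y : Set L).ncard : ℝ) ≤
        6 ^ ((finrank K L - 1) * finrank ℚ K) *
          (Y * (Ideal.absNorm (differentIdeal (𝓞 K) (𝓞 L)) : ℝ) ^
            (-(1 : ℝ) / ((finrank K L : ℝ) * ((finrank K L : ℝ) - 1) * (finrank ℚ K : ℝ)))) ^
            ((finrank K L - 1) * finrank ℚ K) := by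
  set S : Set L := traceZeroIntegersOfHouseLE K Y
  set Δ : ℝ := (Ideal.absNorm (differentIdeal (𝓞 K) (𝓞 L)) : ℝ)
  set z : ℝ := (finrank K L : ℝ) * ((finrank K L : ℝ) - 1) * (finrank ℚ K : ℝ)
  have hz : (((finrank K L - 1) * finrank ℚ L : ℕ) : ℝ) = z := by
    rw [← Module.finrank_mul_finrank ℚ K L]
    push_cast [Nat.cast_sub hn.le]
    ring
  have hz0 : 0 < z := by
    have : (1 : ℝ) < finrank K L := by exact_mod_cast hn
    have : (0 : ℝ) < finrank ℚ K := by exact_mod_cast finrank_pos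
    positivity
  have hΔ : 0 < Δ :=
    Nat.cast_pos.2 (Nat.pos_of_ne_zero (Ideal.absNorm_eq_zero_iff.not.2 differentIdeal_ne_bot))
  set θ := Δ ^ z⁻¹
  have hθ : 0 < θ := Real.rpow_pos_of_pos hΔ _
  have hsep {x : L} (hx0 : x ≠ 0) (hxint : IsIntegral ℤ x) (htr : Algebra.trace K L x = 0) :
      θ ≤ 2 * house x := by
    rw [Real.rpow_inv_le_iff_of_pos hΔ.le (by linarith [house_nonneg x]) hz0, ← hz,
      Real.rpow_natCast]
    exact absNorm_differentIdeal_le ⟨x, hxint⟩ (adjoin_simple_eq_top_of_trace_eq_zero hM hx0 htr)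
  rcases S.eq_empty_or_nonempty with hS | ⟨x₀, hx₀⟩
  · rw [hS, Set.ncard_empty, Nat.cast_zero]
    exact ⟨Set.finite_empty, by positivity⟩
  have hθY : θ ≤ 2 * Y := (hsep hx₀.1 hx₀.2.1 hx₀.2.2.1).trans (by linarith [hx₀.2.2.2])
  obtain ⟨hfin, hcard⟩ := finite_and_ncard_le_of_house_sub_ge (S := S) (fun x hx => hx.2.2.1) hY
    (half_pos hθ) (fun x hx => hx.2.2.2) fun x hx y hy hxy => by
      linarith [hsep (sub_ne_zero.2 hxy) (hx.2.1.sub hy.2.1)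
        (by rw [map_sub, hx.2.2.1, hy.2.2.1, sub_zero])]
  refine ⟨hfin, hcard.trans ?_⟩
  calc ((2 * Y + θ / 2) / (θ / 2)) ^ ((finrank K L - 1) * finrank ℚ K)
      ≤ (6 * (Y * θ⁻¹)) ^ ((finrank K L - 1) * finrank ℚ K) := by
        gcongr
        rw [div_le_iff₀ (half_pos hθ)]
        field_simp
        linarith
    _ = _ := by rw [mul_pow, neg_div, one_div, Real.rpow_neg hΔ.le]

end NumberField

theorem relDiscNorm_eq_absNorm {K Kbar : Type*} [Field K] [NumberField K] [Field Kbar]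
    [Algebra K Kbar] (L : IntermediateField K Kbar) [NumberField L] :
    relDiscNorm K L = Ideal.absNorm (differentIdeal (𝓞 K) (𝓞 L)) := by
  rw [relDiscNorm, dif_pos (inferInstance : FiniteDimensional K L)]

theorem count_traceZero_integers_small_house_general
    (K : Type) [Field K] [NumberField K]
    (Kbar : Type) [Field Kbar] [Algebra K Kbar]
    (n : ℕ) (hn : 3 ≤ n) :
    ∃ c : ℝ, 0 < c ∧
      ∀ L : IntermediateField K Kbar, finrank K L = n →
        (∀ M : IntermediateField K L, M = ⊥ ∨ M = ⊤) →
        ∀ Y : ℝ, 1 ≤ Y →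
          {x : L | x ≠ 0 ∧ IsIntegral ℤ x ∧ Algebra.trace K L x = 0 ∧
            house' x ≤ Y}.Finite ∧
          (Nat.card {x : L | x ≠ 0 ∧ IsIntegral ℤ x ∧ Algebra.trace K L x = 0 ∧
              house' x ≤ Y} : ℝ) ≤
            c * (Y * (relDiscNorm K L : ℝ) ^
                (-(1 : ℝ) / ((n : ℝ) * ((n : ℝ) - 1) * (finrank ℚ K : ℝ)))) ^
              ((n - 1) * finrank ℚ K) := by
  refine ⟨6 ^ ((n - 1) * finrank ℚ K), by positivity, fun L hLn hM Y hY => ?_⟩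
  have : FiniteDimensional K L := .of_finrank_pos (by omega)
  have : NumberField L := .of_module_finite K L
  have hsub : {x : L | x ≠ 0 ∧ IsIntegral ℤ x ∧ Algebra.trace K L x = 0 ∧ house' x ≤ Y} ⊆
      traceZeroIntegersOfHouseLE K Y := fun x ⟨hx0, hxint, htr, hxY⟩ =>
    ⟨hx0, hxint, htr, (house_le_house' hxint).trans hxY⟩
  obtain ⟨hfin, hcard⟩ :=
    finite_traceZeroIntegersOfHouseLE_and_ncard_le (by omega) hM (zero_le_one.trans hY)
  refine ⟨hfin.subset hsub, ?_⟩
  rw [Nat.card_coe_set_eq, relDiscNorm_eq_absNorm, ← hLn]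
  exact (Nat.cast_le.2 (Set.ncard_le_ncard hsub hfin)).trans hcard

/-- if `L/K` has degree `n ≥ 3` and no proper subextensions, then the number
of nonzero trace-zero integers `x ∈ 𝓞_L` with `house(x) ≤ Y` is at most
`c · (Y · Δ_{L/K}^{-1/(n(n-1)d)})^{(n-1)d}`, with `c` depending only on `n` and `K`. -/
theorem count_traceZero_integers_small_house
    (K : Type) [Field K] [NumberField K]
    (Kbar : Type) [Field Kbar] [Algebra K Kbar] [IsAlgClosure K Kbar]
    (n : ℕ) (hn : 3 ≤ n) :
    ∃ c : ℝ, 0 < c ∧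
      ∀ L : IntermediateField K Kbar, finrank K L = n →
        (∀ M : IntermediateField K L, M = ⊥ ∨ M = ⊤) →
        ∀ Y : ℝ, 1 ≤ Y →
          {x : L | x ≠ 0 ∧ IsIntegral ℤ x ∧ Algebra.trace K L x = 0 ∧
            house' x ≤ Y}.Finite ∧
          (Nat.card {x : L | x ≠ 0 ∧ IsIntegral ℤ x ∧ Algebra.trace K L x = 0 ∧
              house' x ≤ Y} : ℝ) ≤
            c * (Y * (relDiscNorm K L : ℝ) ^
                (-(1 : ℝ) / ((n : ℝ) * ((n : ℝ) - 1) * (finrank ℚ K : ℝ)))) ^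
              ((n - 1) * finrank ℚ K) :=
  count_traceZero_integers_small_house_general K Kbar n hn
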